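/- arXiv:1603.08675 — 5 statements merged into one kernel-verified Lean document; each statement's English description precedes it below -/
import Mathlib

section
/- Let T be an m×n matrix with entries in {0,1} and T̃ an approximation with ‖T − T̃‖_F ≤ ε‖T‖_F for 0 < ε < 1 and T̃ ≠ 0. Call a pair (i,j) bad if T_{ij}=0. Then the probability that a sample from T̃ (i.e., pair (i,j) drawn with probability T̃_{ij}²/‖T̃‖_F²) is bad is at most (ε/(1−ε))². -/
/-!
Off the support of `T` the matrix `T - T̃` agrees with `-T̃`, so the mass `T̃` puts on bad pairs is
at most `‖T - T̃‖_F² ≤ ε² ‖T‖_F²`, while the reverse triangle inequality gives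
`‖T̃‖_F ≥ (1 - ε) ‖T‖_F`. Dividing the two bounds gives `(ε / (1 - ε))²`.
-/

noncomputable def frob {m n : ℕ} (A : Matrix (Fin m) (Fin n) ℝ) : ℝ :=
  Real.sqrt (∑ i, ∑ j, (A i j)^2)

open scoped Matrix.Norms.Frobenius

theorem frob_eq_norm {m n : ℕ} (A : Matrix (Fin m) (Fin n) ℝ) : frob A = ‖A‖ := by
  rw [Matrix.frobenius_norm_def, frob, Real.sqrt_eq_rpow]
  simp only [Real.rpow_two, Real.norm_eq_abs, sq_abs]

theorem frob_sq {m n : ℕ} (A : Matrix (Fin m) (Fin n) ℝ) :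
    frob A ^ 2 = ∑ i, ∑ j, A i j ^ 2 :=
  Real.sq_sqrt (by positivity)

theorem sum_sq_off_support_le_frob_sub_sq {m n : ℕ} (T Tt : Matrix (Fin m) (Fin n) ℝ) :
    (∑ i, ∑ j, if T i j = 0 then Tt i j ^ 2 else 0) ≤ frob (T - Tt) ^ 2 := by
  rw [frob_sq]
  gcongr with i _ j _
  split_ifs with hij
  · simp [hij]
  · positivity

theorem one_sub_mul_norm_le_norm_of_norm_sub_le {E : Type*} [SeminormedAddCommGroup E]
    {x y : E} {ε : ℝ} (h : ‖x - y‖ ≤ ε * ‖x‖) : (1 - ε) * ‖x‖ ≤ ‖y‖ := by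
  have := norm_sub_norm_le x y
  linarith

theorem div_norm_sq_le_of_norm_sub_le {E : Type*} [SeminormedAddCommGroup E]
    {x y : E} {ε b : ℝ} (hε : ε < 1) (h : ‖x - y‖ ≤ ε * ‖x‖) (hb : b ≤ ‖x - y‖ ^ 2) :
    b / ‖y‖ ^ 2 ≤ (ε / (1 - ε)) ^ 2 := by
  have h1ε : 0 < 1 - ε := sub_pos.mpr hε
  have hy : (1 - ε) * ‖x‖ ≤ ‖y‖ := one_sub_mul_norm_le_norm_of_norm_sub_le h
  -- no `y ≠ 0` needed: when `‖y‖ = 0` the quotient is `0` by Lean's convention `b / 0 = 0`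
  refine div_le_of_le_mul₀ (by positivity) (by positivity) ?_
  calc b ≤ (ε * ‖x‖) ^ 2 := hb.trans (pow_le_pow_left₀ (norm_nonneg _) h 2)
    _ = (ε / (1 - ε)) ^ 2 * ((1 - ε) * ‖x‖) ^ 2 := by field_simp
    _ ≤ (ε / (1 - ε)) ^ 2 * ‖y‖ ^ 2 := by gcongr

theorem stmt1_general {m n : ℕ} (T Tt : Matrix (Fin m) (Fin n) ℝ) (ε : ℝ)
    (hε1 : ε < 1)
    (h : frob (T - Tt) ≤ ε * frob T) :
    (∑ i, ∑ j, if T i j = 0 then (Tt i j)^2 else 0) / (∑ i, ∑ j, (Tt i j)^2)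
      ≤ (ε / (1 - ε))^2 := by
  have hbad := sum_sq_off_support_le_frob_sub_sq T Tt
  rw [← frob_sq Tt]
  simp only [frob_eq_norm] at h hbad ⊢
  exact div_norm_sq_le_of_norm_sub_le hε1 h hbad

theorem stmt1 {m n : ℕ} (T Tt : Matrix (Fin m) (Fin n) ℝ) (ε : ℝ)
    (hT : ∀ i j, T i j = 0 ∨ T i j = 1)
    (hε0 : 0 < ε) (hε1 : ε < 1)
    (h : frob (T - Tt) ≤ ε * frob T)
    (hTt : Tt ≠ 0) :
    (∑ i, ∑ j, if T i j = 0 then (Tt i j)^2 else 0) / (∑ i, ∑ j, (Tt i j)^2)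
      ≤ (ε / (1 - ε))^2 :=
  stmt1_general T Tt ε hε1 h
end

section
/- Let A be an m×n matrix, let σ > 0, and let A_{≥σ} denote the truncation of A to singular vectors with singular value at least σ. For any rank parameter k: if the number ℓ of singular values ≥ σ satisfies ℓ ≥ k, then ‖A − A_{≥σ}‖_F ≤ ‖A − A_k‖_F; if ℓ < k, then ‖A − A_{≥σ}‖_F ≤ ‖A − A_k‖_F + √(k)·σ. -/
/-!
Since the singular values are nonincreasing, `{i | σ ≤ s i}` is the initial segment
`{i < ℓ}`, so `A_{≥σ} = A_ℓ`. For orthonormal `u i`, `v i` the rank-one terms are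
Frobenius-orthonormal, so `‖A - A_c‖_F² = ∑_{i ≥ c} s i²`. If `k ≤ ℓ` the tail from `ℓ` is part
of the tail from `k`. Otherwise the extra terms `ℓ ≤ i < k` have `s i < σ`, so they add at most
`k σ²` under the square root, and `√(a + b) ≤ √a + √b`.
-/

open Matrix Finset

lemma Real.sqrt_add_le_add_sqrt {x y : ℝ} (hx : 0 ≤ x) (hy : 0 ≤ y) :
    √(x + y) ≤ √x + √y := by
  rw [Real.sqrt_le_iff]
  refine ⟨by positivity, ?_⟩
  nlinarith [Real.sq_sqrt hx, Real.sq_sqrt hy, Real.sqrt_nonneg x, Real.sqrt_nonneg y]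

lemma Finset.sum_sub_sum_filter {ι M : Type*} [AddCommGroup M] (s : Finset ι) (p : ι → Prop)
    [DecidablePred p] (f : ι → M) :
    ∑ i ∈ s, f i - ∑ i ∈ s with p i, f i = ∑ i ∈ s with ¬p i, f i :=
  (eq_sub_of_add_eq (sum_filter_not_add_sum_filter s p f)).symm

lemma Antitone.le_apply_iff_lt_card {α : Type*} [Preorder α] [DecidableLE α] {r : ℕ}
    {s : Fin r → α} (hs : Antitone s) (σ : α) (i : Fin r) :
    σ ≤ s i ↔ (i : ℕ) < #(univ.filter fun j => σ ≤ s j) :=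
  (Fin.lt_card_filter_univ_iff_apply_of_imp (fun j => σ ≤ s j)
    fun _ _ hji h => h.trans (hs hji)).symm

lemma sum_sq_sum_smul_vecMulVec {ι : Type*} {m n : ℕ} (T : Finset ι) (s : ι → ℝ)
    (u : ι → Fin m → ℝ) (v : ι → Fin n → ℝ) :
    ∑ a, ∑ b, (∑ i ∈ T, s i • vecMulVec (u i) (v i)) a b ^ 2 =
      ∑ i ∈ T, ∑ j ∈ T, s i * s j * ((∑ a, u i a * u j a) * ∑ b, v i b * v j b) := by
  simp only [Matrix.sum_apply, Matrix.smul_apply, vecMulVec_apply, smul_eq_mul, sq,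
    sum_mul_sum]
  simp_rw [sum_comm (s := (univ : Finset (Fin n))) (t := T),
    sum_comm (s := (univ : Finset (Fin m))) (t := T), mul_sum]
  refine sum_congr rfl fun i _ => sum_congr rfl fun j _ =>
    sum_congr rfl fun a _ => sum_congr rfl fun b _ => ?_
  ring

lemma frob_sum_smul_vecMulVec {ι : Type*} [DecidableEq ι] {m n : ℕ} (T : Finset ι)
    (s : ι → ℝ) (u : ι → Fin m → ℝ) (v : ι → Fin n → ℝ)
    (hu : ∀ i j, ∑ a, u i a * u j a = if i = j then (1:ℝ) else 0)
    (hv : ∀ i j, ∑ a, v i a * v j a = if i = j then (1:ℝ) else 0) :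
    frob (∑ i ∈ T, s i • vecMulVec (u i) (v i)) = √(∑ i ∈ T, s i ^ 2) := by
  rw [frob, sum_sq_sum_smul_vecMulVec]
  simp [hu, hv, sq]

lemma Fin.sum_tail_le_sum_tail_add_mul {r ℓ : ℕ} {f : Fin r → ℝ} {c : ℝ} (hf : ∀ i, 0 ≤ f i)
    (hc : ∀ i : Fin r, ℓ ≤ (i : ℕ) → f i ≤ c) (hc0 : 0 ≤ c) (k : ℕ) :
    ∑ i ∈ univ.filter (fun i : Fin r => ℓ ≤ (i : ℕ)), f i ≤
      ∑ i ∈ univ.filter (fun i : Fin r => k ≤ (i : ℕ)), f i + k * c := by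
  rw [← sum_filter_not_add_sum_filter _ (fun i : Fin r => (i : ℕ) < k), filter_filter,
    filter_filter]
  refine add_le_add (sum_le_sum_of_subset_of_nonneg
    (monotone_filter_right _ fun _ _ h => not_lt.1 h.2) fun i _ _ => hf i) ?_
  calc ∑ i ∈ univ.filter (fun i : Fin r => ℓ ≤ (i : ℕ) ∧ (i : ℕ) < k), f i
      ≤ #(univ.filter fun i : Fin r => ℓ ≤ (i : ℕ) ∧ (i : ℕ) < k) • c :=
        sum_le_card_nsmul _ _ _ fun i hi => hc i (mem_filter.1 hi).2.1
    _ ≤ #(univ.filter fun i : Fin r => (i : ℕ) < k) • c :=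
        nsmul_le_nsmul_left hc0 (card_le_card (monotone_filter_right _ fun _ _ h => h.2))
    _ ≤ k * c := by
        rw [nsmul_eq_mul]
        gcongr
        exact Fin.card_filter_val_lt.trans_le (min_le_right _ _)

theorem stmt6 {m n r : ℕ} (A : Matrix (Fin m) (Fin n) ℝ)
    (s : Fin r → ℝ) (u : Fin r → Fin m → ℝ) (v : Fin r → Fin n → ℝ)
    (hs0 : ∀ i, 0 ≤ s i)
    (hmono : ∀ i j : Fin r, i ≤ j → s j ≤ s i)
    (hu : ∀ i j, ∑ a, u i a * u j a = if i = j then (1:ℝ) else 0)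
    (hv : ∀ i j, ∑ a, v i a * v j a = if i = j then (1:ℝ) else 0)
    (hA : A = ∑ i, s i • Matrix.vecMulVec (u i) (v i))
    (σ : ℝ) (hσ : 0 < σ) (k : ℕ)
    (Ak Aσ : Matrix (Fin m) (Fin n) ℝ)
    (hAk : Ak = ∑ i ∈ Finset.univ.filter (fun i : Fin r => (i : ℕ) < k),
      s i • Matrix.vecMulVec (u i) (v i))
    (hAσ : Aσ = ∑ i ∈ Finset.univ.filter (fun i : Fin r => σ ≤ s i),
      s i • Matrix.vecMulVec (u i) (v i))
    (ℓ : ℕ) (hℓ : ℓ = (Finset.univ.filter (fun i : Fin r => σ ≤ s i)).card) :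
    (k ≤ ℓ → frob (A - Aσ) ≤ frob (A - Ak)) ∧
    (ℓ < k → frob (A - Aσ) ≤ frob (A - Ak) + Real.sqrt k * σ) := by
  have hcut (i : Fin r) : σ ≤ s i ↔ (i : ℕ) < ℓ := hℓ ▸ Antitone.le_apply_iff_lt_card hmono σ i
  have htail (c : ℕ) :
      frob (A - ∑ i ∈ univ.filter (fun i : Fin r => (i : ℕ) < c), s i • vecMulVec (u i) (v i)) =
        √(∑ i ∈ univ.filter (fun i : Fin r => c ≤ (i : ℕ)), s i ^ 2) := by
    rw [hA, sum_sub_sum_filter, frob_sum_smul_vecMulVec _ _ _ _ hu hv]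
    simp only [not_lt]
  rw [hAσ, filter_congr fun i _ => hcut i, hAk, htail, htail]
  refine ⟨fun hkℓ => Real.sqrt_le_sqrt <| sum_le_sum_of_subset_of_nonneg
    (monotone_filter_right _ fun _ _ h => hkℓ.trans h) fun _ _ _ => sq_nonneg _, fun _ => ?_⟩
  have hsmall (i : Fin r) (hi : ℓ ≤ (i : ℕ)) : s i ^ 2 ≤ σ ^ 2 :=
    pow_le_pow_left₀ (hs0 i) (not_le.1 <| (hcut i).not.2 (not_lt.2 hi)).le 2
  calc √(∑ i ∈ univ.filter (fun i : Fin r => ℓ ≤ (i : ℕ)), s i ^ 2)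
      ≤ √(∑ i ∈ univ.filter (fun i : Fin r => k ≤ (i : ℕ)), s i ^ 2 + k * σ ^ 2) :=
        Real.sqrt_le_sqrt <|
          Fin.sum_tail_le_sum_tail_add_mul (fun i => sq_nonneg (s i)) hsmall (sq_nonneg σ) k
    _ ≤ √(∑ i ∈ univ.filter (fun i : Fin r => k ≤ (i : ℕ)), s i ^ 2) + √(k * σ ^ 2) :=
        Real.sqrt_add_le_add_sqrt (sum_nonneg fun _ _ => sq_nonneg _) (by positivity)
    _ = _ := by rw [Real.sqrt_mul (Nat.cast_nonneg k), Real.sqrt_sq hσ.le]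
end

section
/- Let A ∈ ℝ^{m×n} with rows A_i, all nonzero, and ‖A‖_F > 0. Define P ∈ ℝ^{mn×m} with columns e_i ⊗ (A_i/‖A_i‖) for i ∈ [m], and Q ∈ ℝ^{mn×n} with columns (Ã/‖A‖_F) ⊗ e_j for j ∈ [n], where Ã ∈ ℝ^m has entries Ã_i = ‖A_i‖. Then PᵗP = I_m, QᵗQ = I_n, and PᵗQ = A/‖A‖_F. -/
/-!
Columns of the form `e_i ⊗ u_i` have Gram matrix `diag ⟨u_i, u_i⟩`, columns `v ⊗ e_j` have Gram
matrix `⟨v, v⟩ I`, and the cross inner products are `⟨e_i ⊗ u_i, v ⊗ e_j⟩ = u_i(j) v_i`. With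
`u_i = A_i / ‖A_i‖` and `v = Ã / ‖A‖_F` both normalizations give unit vectors (note `‖Ã‖ = ‖A‖_F`),
and the cross terms are `A_ij / ‖A_i‖ · ‖A_i‖ / ‖A‖_F = A_ij / ‖A‖_F`.
-/

open Matrix

namespace Matrix

variable {m n α : Type*}

/-- The matrix whose `i`-th column is `e_i ⊗ u i`. -/
def basisKronCols [DecidableEq m] [Zero α] (u : m → n → α) : Matrix (m × n) m α :=
  of fun p i => if p.1 = i then u p.1 p.2 else 0

variable (n) in
/-- The matrix whose `j`-th column is `v ⊗ e_j`. -/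
def kronBasisCols [DecidableEq n] [Zero α] (v : m → α) : Matrix (m × n) n α :=
  of fun p j => if p.2 = j then v p.1 else 0

variable [Fintype m] [Fintype n] [NonUnitalNonAssocSemiring α]

theorem transpose_basisKronCols_mul_self [DecidableEq m] (u : m → n → α) :
    (basisKronCols u)ᵀ * basisKronCols u = diagonal fun i => u i ⬝ᵥ u i := by
  refine Matrix.ext fun i i' => ?_
  rw [mul_apply, Fintype.sum_prod_type, Finset.sum_eq_single i (by simp_all [basisKronCols])
    (by simp)]
  by_cases h : i = i' <;> simp [basisKronCols, dotProduct, h]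

theorem transpose_kronBasisCols_mul_self [DecidableEq n] (v : m → α) :
    (kronBasisCols n v)ᵀ * kronBasisCols n v = diagonal fun _ => v ⬝ᵥ v := by
  refine Matrix.ext fun j j' => ?_
  rw [mul_apply, Fintype.sum_prod_type]
  refine (Finset.sum_congr rfl fun i _ => Finset.sum_eq_single j
    (by simp_all [kronBasisCols]) (by simp)).trans ?_
  by_cases h : j = j' <;> simp [kronBasisCols, dotProduct, h]

theorem transpose_basisKronCols_mul_kronBasisCols [DecidableEq m] [DecidableEq n]
    (u : m → n → α) (v : m → α) :
    (basisKronCols u)ᵀ * kronBasisCols n v = of fun i j => u i j * v i := by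
  refine Matrix.ext fun i j => ?_
  rw [mul_apply, Fintype.sum_prod_type, Finset.sum_eq_single i (by simp_all [basisKronCols])
    (by simp), Finset.sum_eq_single j (by simp_all [kronBasisCols]) (by simp)]
  simp [basisKronCols, kronBasisCols]

end Matrix

theorem dotProduct_self_div_sqrt {n : Type*} [Fintype n] {x : n → ℝ}
    (hx : 0 < √(∑ j, x j ^ 2)) :
    (fun j => x j / √(∑ j, x j ^ 2)) ⬝ᵥ (fun j => x j / √(∑ j, x j ^ 2)) = 1 := by
  simp only [dotProduct, ← sq, div_pow, ← Finset.sum_div]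
  rw [Real.sq_sqrt (Finset.sum_nonneg fun j _ => sq_nonneg _)]
  exact div_self (Real.sqrt_pos.mp hx).ne'

theorem stmt7 {m n : ℕ} (A : Matrix (Fin m) (Fin n) ℝ)
    (hrows : ∀ i, 0 < Real.sqrt (∑ j, (A i j)^2))
    (hF : 0 < Real.sqrt (∑ i, ∑ j, (A i j)^2))
    (P : Matrix (Fin m × Fin n) (Fin m) ℝ)
    (Q : Matrix (Fin m × Fin n) (Fin n) ℝ)
    (hP : ∀ p i', P p i' =
      if p.1 = i' then A p.1 p.2 / Real.sqrt (∑ j, (A p.1 j)^2) else 0)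
    (hQ : ∀ p j', Q p j' =
      if p.2 = j' then Real.sqrt (∑ j, (A p.1 j)^2) / Real.sqrt (∑ i, ∑ j, (A i j)^2) else 0) :
    Pᵀ * P = 1 ∧ Qᵀ * Q = 1 ∧
      Pᵀ * Q = (Real.sqrt (∑ i, ∑ j, (A i j)^2))⁻¹ • A := by
  set r : Fin m → ℝ := fun i => √(∑ j, A i j ^ 2)
  have hrF : √(∑ i, ∑ j, A i j ^ 2) = √(∑ i, r i ^ 2) := by
    simp only [r, Real.sq_sqrt (Finset.sum_nonneg fun _ _ => sq_nonneg _)]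
  have hP' : P = basisKronCols fun i j => A i j / r i := ext hP
  have hQ' : Q = kronBasisCols (Fin n) fun i => r i / √(∑ i, r i ^ 2) := by
    ext p j; rw [hQ, hrF]; rfl
  refine ⟨?_, ?_, ?_⟩
  · rw [hP', transpose_basisKronCols_mul_self, ← diagonal_one]
    exact congrArg diagonal (funext fun i => dotProduct_self_div_sqrt (hrows i))
  · rw [hQ', transpose_kronBasisCols_mul_self, dotProduct_self_div_sqrt (hrF ▸ hF), diagonal_one]
  · rw [hP', hQ', transpose_basisKronCols_mul_kronBasisCols, ← hrF]
    ext i j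
    rw [of_apply, div_mul_div_cancel₀ (hrows i).ne', Matrix.smul_apply, smul_eq_mul,
      div_eq_inv_mul]
end

section
/- Let P ∈ ℝ^{N×m} and Q ∈ ℝ^{N×n} satisfy PᵗP = I_m and QᵗQ = I_n, and suppose PᵗQ = A/‖A‖_F for some matrix A with SVD A = Σ σ_i u_i v_iᵗ. Define the reflections U = 2PPᵗ − I_N and V = 2QQᵗ − I_N, and W = U·V. Then for each singular pair (u_i, v_i) with σ_i > 0, the two-dimensional subspace Span(Pu_i, Qv_i) is invariant under W, and we have PPᵗQv_i = (σ_i/‖A‖_F)·Pu_i and QQᵗPu_i = (σ_i/‖A‖_F)·Qv_i. -/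
/-!
Since `Pᵀ Q` is a multiple of `A`, the projection `P Pᵀ` fixes `P uᵢ` and sends `Q vᵢ` to
`(σᵢ / ‖A‖_F) P uᵢ`, and symmetrically for `Q Qᵀ`. So both projections, hence both reflections
and their product `W`, preserve `span {P uᵢ, Q vᵢ}`.
-/

open Matrix

namespace Matrix

variable {R : Type*} [CommRing R] {ι l m n : Type*}

theorem sum_smul_vecMulVec_mulVec_of_orthonormal [Fintype ι] [DecidableEq ι] [Fintype n]
    (s : ι → R) (u : ι → m → R) (v : ι → n → R)
    (hv : ∀ i j, v i ⬝ᵥ v j = if i = j then 1 else 0) (i : ι) :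
    (∑ j, s j • vecMulVec (u j) (v j)) *ᵥ v i = s i • u i := by
  simp only [sum_mulVec, smul_mulVec, vecMulVec_mulVec, op_smul_eq_smul, hv, ite_smul, one_smul,
    zero_smul, smul_ite, smul_zero, Finset.sum_ite_eq', Finset.mem_univ, if_true]

theorem transpose_sum_smul_vecMulVec [Fintype ι] (s : ι → R) (u : ι → m → R) (v : ι → n → R) :
    (∑ j, s j • vecMulVec (u j) (v j))ᵀ = ∑ j, s j • vecMulVec (v j) (u j) := by
  simp only [transpose_sum, transpose_smul, transpose_vecMulVec]

variable [Fintype l] [Fintype m] [Fintype n]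

theorem mul_transpose_mulVec_mulVec_of_transpose_mul_self [DecidableEq m] {P : Matrix l m R}
    (hP : Pᵀ * P = 1) (x : m → R) : (P * Pᵀ) *ᵥ (P *ᵥ x) = P *ᵥ x := by
  rw [mulVec_mulVec, Matrix.mul_assoc, hP, Matrix.mul_one]

theorem mul_transpose_mul_mulVec_of_transpose_mul_eq_smul {P : Matrix l m R} {Q : Matrix l n R}
    {A : Matrix m n R} {c σ : R} {x : m → R} {y : n → R}
    (hPQ : Pᵀ * Q = c • A) (hA : A *ᵥ y = σ • x) :
    (P * Pᵀ * Q) *ᵥ y = (c * σ) • P *ᵥ x := by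
  rw [Matrix.mul_assoc, hPQ, ← mulVec_mulVec, smul_mulVec, hA, mulVec_smul, mulVec_smul,
    smul_smul]

variable [DecidableEq l]

theorem two_smul_sub_one_mulVec_mem_span_pair {M : Matrix l l R} {a b : l → R} {c : R}
    (ha : M *ᵥ a = a) (hb : M *ᵥ b = c • a) {z : l → R}
    (hz : z ∈ Submodule.span R {a, b}) : (2 • M - 1) *ᵥ z ∈ Submodule.span R {a, b} := by
  obtain ⟨x, y, rfl⟩ := Submodule.mem_span_pair.mp hz
  refine Submodule.mem_span_pair.mpr ⟨x + (2 * c) * y, -y, ?_⟩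
  simp only [sub_mulVec, one_mulVec, smul_mulVec, mulVec_add, mulVec_smul, ha, hb]
  module

end Matrix

theorem stmt8_general {N m n r : ℕ}
    (P : Matrix (Fin N) (Fin m) ℝ) (Q : Matrix (Fin N) (Fin n) ℝ)
    (A : Matrix (Fin m) (Fin n) ℝ)
    (s : Fin r → ℝ) (u : Fin r → Fin m → ℝ) (v : Fin r → Fin n → ℝ)
    (hu : ∀ i j, ∑ a, u i a * u j a = if i = j then (1:ℝ) else 0)
    (hv : ∀ i j, ∑ a, v i a * v j a = if i = j then (1:ℝ) else 0)
    (hA : A = ∑ i, s i • Matrix.vecMulVec (u i) (v i))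
    (F : ℝ)
    (hP : Pᵀ * P = 1) (hQ : Qᵀ * Q = 1)
    (hPQ : Pᵀ * Q = F⁻¹ • A)
    (W : Matrix (Fin N) (Fin N) ℝ)
    (hW : W = (2 • (P * Pᵀ) - 1) * (2 • (Q * Qᵀ) - 1))
    (i : Fin r) :
    (∀ z ∈ Submodule.span ℝ ({P.mulVec (u i), Q.mulVec (v i)} : Set (Fin N → ℝ)),
        W.mulVec z ∈ Submodule.span ℝ ({P.mulVec (u i), Q.mulVec (v i)} : Set (Fin N → ℝ))) ∧
    (P * Pᵀ * Q).mulVec (v i) = (s i / F) • P.mulVec (u i) ∧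
    (Q * Qᵀ * P).mulVec (u i) = (s i / F) • Q.mulVec (v i) := by
  have hAv : A *ᵥ v i = s i • u i := by
    rw [hA]; exact sum_smul_vecMulVec_mulVec_of_orthonormal s u v hv i
  have hAu : Aᵀ *ᵥ u i = s i • v i := by
    rw [hA, transpose_sum_smul_vecMulVec]
    exact sum_smul_vecMulVec_mulVec_of_orthonormal s v u hu i
  have hQP : Qᵀ * P = F⁻¹ • Aᵀ := by
    rw [← transpose_transpose P, ← transpose_mul, hPQ, transpose_smul]
  have hPPQ := mul_transpose_mul_mulVec_of_transpose_mul_eq_smul hPQ hAv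
  have hQQP := mul_transpose_mul_mulVec_of_transpose_mul_eq_smul hQP hAu
  rw [inv_mul_eq_div] at hPPQ hQQP
  refine ⟨fun z hz => ?_, hPPQ, hQQP⟩
  rw [hW, ← mulVec_mulVec]
  refine two_smul_sub_one_mulVec_mem_span_pair
    (mul_transpose_mulVec_mulVec_of_transpose_mul_self hP _) (by rwa [mulVec_mulVec]) ?_
  rw [Set.pair_comm] at hz ⊢
  exact two_smul_sub_one_mulVec_mem_span_pair
    (mul_transpose_mulVec_mulVec_of_transpose_mul_self hQ _) (by rwa [mulVec_mulVec]) hz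

theorem stmt8 {N m n r : ℕ}
    (P : Matrix (Fin N) (Fin m) ℝ) (Q : Matrix (Fin N) (Fin n) ℝ)
    (A : Matrix (Fin m) (Fin n) ℝ)
    (s : Fin r → ℝ) (u : Fin r → Fin m → ℝ) (v : Fin r → Fin n → ℝ)
    (hu : ∀ i j, ∑ a, u i a * u j a = if i = j then (1:ℝ) else 0)
    (hv : ∀ i j, ∑ a, v i a * v j a = if i = j then (1:ℝ) else 0)
    (hA : A = ∑ i, s i • Matrix.vecMulVec (u i) (v i))
    (F : ℝ) (hF : F = Real.sqrt (∑ i, ∑ j, (A i j)^2)) (hFpos : 0 < F)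
    (hP : Pᵀ * P = 1) (hQ : Qᵀ * Q = 1)
    (hPQ : Pᵀ * Q = F⁻¹ • A)
    (W : Matrix (Fin N) (Fin N) ℝ)
    (hW : W = (2 • (P * Pᵀ) - 1) * (2 • (Q * Qᵀ) - 1))
    (i : Fin r) (hσ : 0 < s i) :
    (∀ z ∈ Submodule.span ℝ ({P.mulVec (u i), Q.mulVec (v i)} : Set (Fin N → ℝ)),
        W.mulVec z ∈ Submodule.span ℝ ({P.mulVec (u i), Q.mulVec (v i)} : Set (Fin N → ℝ))) ∧
    (P * Pᵀ * Q).mulVec (v i) = (s i / F) • P.mulVec (u i) ∧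
    (Q * Qᵀ * P).mulVec (u i) = (s i / F) • Q.mulVec (v i) :=
  stmt8_general P Q A s u v hu hv hA F hP hQ hPQ W hW i
end

section
/- With P, Q, W = (2PPᵗ − I)(2QQᵗ − I) as above satisfying PᵗQ = A/‖A‖_F, for each singular pair (u_i, v_i) of A with singular value σ_i, the restriction of W to Span(Pu_i, Qv_i) has eigenvalues e^{±iθ_i}, where cos(θ_i/2) = σ_i/‖A‖_F. -/
open Matrix

private lemma svd_mulVec {m n r : ℕ} (s : Fin r → ℝ) (w : Fin r → Fin m → ℝ)
    (x : Fin r → Fin n → ℝ)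
    (hx : ∀ i j, ∑ a, x i a * x j a = if i = j then (1:ℝ) else 0) (i : Fin r) :
    (∑ j, s j • Matrix.vecMulVec (w j) (x j)) *ᵥ x i = s i • w i := by
  ext k
  simp only [mulVec, dotProduct, Matrix.sum_apply, vecMulVec, Matrix.smul_apply, of_apply,
    smul_eq_mul, Finset.sum_mul, Pi.smul_apply]
  rw [Finset.sum_comm]
  have h1 : ∀ j, ∑ a, s j * (w j k * x j a) * x i a = s j * w j k * ∑ a, x j a * x i a := by
    intro j; rw [Finset.mul_sum]; congr 1; ext a; ring
  simp only [h1, hx]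
  simp [Finset.sum_ite_eq, mul_comm]

theorem stmt9 {N m n r : ℕ}
    (P : Matrix (Fin N) (Fin m) ℝ) (Q : Matrix (Fin N) (Fin n) ℝ)
    (A : Matrix (Fin m) (Fin n) ℝ)
    (s : Fin r → ℝ) (u : Fin r → Fin m → ℝ) (v : Fin r → Fin n → ℝ)
    (hu : ∀ i j, ∑ a, u i a * u j a = if i = j then (1:ℝ) else 0)
    (hv : ∀ i j, ∑ a, v i a * v j a = if i = j then (1:ℝ) else 0)
    (hA : A = ∑ i, s i • Matrix.vecMulVec (u i) (v i))
    (F : ℝ) (hF : F = Real.sqrt (∑ i, ∑ j, (A i j)^2)) (hFpos : 0 < F)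
    (hP : Pᵀ * P = 1) (hQ : Qᵀ * Q = 1)
    (hPQ : Pᵀ * Q = F⁻¹ • A)
    (W : Matrix (Fin N) (Fin N) ℝ)
    (hW : W = (2 • (P * Pᵀ) - 1) * (2 • (Q * Qᵀ) - 1))
    (i : Fin r) (hσ0 : 0 < s i) (hσF : s i ≤ F)
    (θ : ℝ) (hθ : θ ∈ Set.Icc (0:ℝ) Real.pi)
    (hcos : Real.cos (θ / 2) = s i / F) :
    -- W leaves Span(Pu_i, Qv_i) invariant and, restricted to it, satisfies the
    -- characteristic equation of a rotation by θ, i.e. it has eigenvalues e^{±iθ}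
    (∀ z ∈ Submodule.span ℝ ({P.mulVec (u i), Q.mulVec (v i)} : Set (Fin N → ℝ)),
        W.mulVec z ∈ Submodule.span ℝ ({P.mulVec (u i), Q.mulVec (v i)} : Set (Fin N → ℝ))) ∧
    (∀ z ∈ Submodule.span ℝ ({P.mulVec (u i), Q.mulVec (v i)} : Set (Fin N → ℝ)),
        (W * W).mulVec z - (2 * Real.cos θ) • W.mulVec z + z = 0) := by
  set p : Fin N → ℝ := P *ᵥ u i with hp
  set q : Fin N → ℝ := Q *ᵥ v i with hq
  set c : ℝ := s i / F with hc
  -- SVD action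
  have hAv : A *ᵥ v i = s i • u i := by rw [hA]; exact svd_mulVec s u v hv i
  have hAt : Aᵀ = ∑ j, s j • Matrix.vecMulVec (v j) (u j) := by
    rw [hA]; ext a b; simp [vecMulVec, Matrix.sum_apply, mul_comm]
  have hAtu : Aᵀ *ᵥ u i = s i • v i := by rw [hAt]; exact svd_mulVec s v u hu i
  -- reflection action
  have h2 : ∀ (M : Matrix (Fin N) (Fin N) ℝ) (x : Fin N → ℝ),
      (2 • M - 1) *ᵥ x = M *ᵥ x + M *ᵥ x - x := by
    intro M x
    rw [sub_mulVec, one_mulVec, two_smul ℕ M, add_mulVec]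
  have hQQq : (Q * Qᵀ) *ᵥ q = q := by
    rw [hq, mulVec_mulVec, Matrix.mul_assoc, hQ, Matrix.mul_one]
  have hPPp : (P * Pᵀ) *ᵥ p = p := by
    rw [hp, mulVec_mulVec, Matrix.mul_assoc, hP, Matrix.mul_one]
  have hPPq : (P * Pᵀ) *ᵥ q = c • p := by
    rw [hq, mulVec_mulVec, Matrix.mul_assoc, hPQ, Matrix.mul_smul, smul_mulVec, ← mulVec_mulVec,
      hAv, mulVec_smul]
    have hcc : F⁻¹ * s i = c := by rw [hc]; ring
    rw [smul_smul, hcc]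
  have hQP : Qᵀ * P = F⁻¹ • Aᵀ := by
    have := congrArg Matrix.transpose hPQ
    simpa [Matrix.transpose_mul, Matrix.transpose_smul] using this
  have hQQp : (Q * Qᵀ) *ᵥ p = c • q := by
    rw [hp, mulVec_mulVec, Matrix.mul_assoc, hQP, Matrix.mul_smul, smul_mulVec, ← mulVec_mulVec,
      hAtu, mulVec_smul]
    have hcc : F⁻¹ * s i = c := by rw [hc]; ring
    rw [smul_smul, hcc]
  -- action of W on p, q
  have hRq : (2 • (Q * Qᵀ) - 1) *ᵥ q = q := by
    rw [h2, hQQq]; abel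
  have hRp : (2 • (Q * Qᵀ) - 1) *ᵥ p = (2*c) • q - p := by
    rw [h2, hQQp]; module
  have hWq : W *ᵥ q = (2*c) • p - q := by
    rw [hW, ← mulVec_mulVec, hRq, h2, hPPq]; module
  have hWp : W *ᵥ p = (4*c^2-1) • p - (2*c) • q := by
    rw [hW, ← mulVec_mulVec, hRp, mulVec_sub, mulVec_smul, h2, h2, hPPq, hPPp]; module
  -- cos θ
  have hct : Real.cos θ = 2*c^2 - 1 := by
    have h := Real.cos_two_mul (θ/2)
    have h2θ : 2*(θ/2) = θ := by ring
    rw [h2θ, hcos] at h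
    exact h
  have hW2q : (W * W) *ᵥ q = (2*c) • ((4*c^2-1) • p - (2*c) • q) - ((2*c) • p - q) := by
    rw [← mulVec_mulVec, hWq, mulVec_sub, mulVec_smul, hWp, hWq]
  have hW2p : (W * W) *ᵥ p = (4*c^2-1) • ((4*c^2-1) • p - (2*c) • q) - (2*c) • ((2*c) • p - q) := by
    rw [← mulVec_mulVec, hWp, mulVec_sub, mulVec_smul, mulVec_smul, hWp, hWq]
  -- characteristic equation on p and q
  have hchp : (W * W) *ᵥ p - (2 * Real.cos θ) • (W *ᵥ p) + p = 0 := by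
    rw [hW2p, hWp, hct]; module
  have hchq : (W * W) *ᵥ q - (2 * Real.cos θ) • (W *ᵥ q) + q = 0 := by
    rw [hW2q, hWq, hct]; module
  -- span facts
  set S : Set (Fin N → ℝ) := {p, q} with hS
  have hpmem : p ∈ Submodule.span ℝ S := Submodule.subset_span (by simp [hS])
  have hqmem : q ∈ Submodule.span ℝ S := Submodule.subset_span (by simp [hS])
  constructor
  · intro z hz
    have hle : Submodule.span ℝ S ≤ Submodule.comap W.mulVecLin (Submodule.span ℝ S) := by
      rw [Submodule.span_le]
      rintro x hx
      rcases hx with rfl | rfl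
      · simp only [SetLike.mem_coe, Submodule.mem_comap, mulVecLin_apply, hWp]
        exact Submodule.sub_mem _ (Submodule.smul_mem _ _ hpmem) (Submodule.smul_mem _ _ hqmem)
      · simp only [SetLike.mem_coe, Submodule.mem_comap, mulVecLin_apply, hWq]
        exact Submodule.sub_mem _ (Submodule.smul_mem _ _ hpmem) hqmem
    have := hle hz
    simpa [Submodule.mem_comap, mulVecLin_apply] using this
  · intro z hz
    set g : (Fin N → ℝ) →ₗ[ℝ] (Fin N → ℝ) :=
      (W * W).mulVecLin - (2 * Real.cos θ) • W.mulVecLin + LinearMap.id with hg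
    have hgz : ∀ x, g x = (W * W) *ᵥ x - (2 * Real.cos θ) • (W *ᵥ x) + x := by
      intro x; simp [hg, LinearMap.add_apply, LinearMap.sub_apply, LinearMap.smul_apply,
        mulVecLin_apply]
    have hle : Submodule.span ℝ S ≤ LinearMap.ker g := by
      rw [Submodule.span_le]
      rintro x hx
      rcases hx with rfl | rfl
      · simp only [SetLike.mem_coe, LinearMap.mem_ker, hgz]; exact hchp
      · simp only [SetLike.mem_coe, LinearMap.mem_ker, hgz]; exact hchq
    have := hle hz
    rw [LinearMap.mem_ker, hgz] at this
    exact this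
end
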